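/- Let T = (T₁,T₂) be a commuting pair with vanishing defect operator, f₀ a vector in a wandering subspace for T, and m, n, q nonnegative integers with n ≠ q. Then ⟨T₁^m T₂^n f₀, T₁^m T₂^q f₀⟩ = ⟨T₂^n f₀, T₂^q f₀⟩. -/

import Mathlib

open ContinuousLinearMap

variable {H : Type*} [NormedAddCommGroup H] [InnerProductSpace ℂ H] [CompleteSpace H]

/-- A subspace `W` is wandering for the pair `(T1, T2)` if
`T1^a W ⟂ T1^{b1} T2^{b2} W` whenever `b2 ≠ 0`, and
`T2^a W ⟂ T1^{b1} T2^{b2} W` whenever `b1 ≠ 0`. -/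
def IsWandering (T1 T2 : H →L[ℂ] H) (W : Submodule ℂ H) : Prop :=
  ∀ f ∈ W, ∀ g ∈ W, ∀ a b1 b2 : ℕ,
    (b2 ≠ 0 → (inner ℂ ((T1 ^ a) f) ((T1 ^ b1 * T2 ^ b2) g) : ℂ) = 0) ∧
    (b1 ≠ 0 → (inner ℂ ((T2 ^ a) f) ((T1 ^ b1 * T2 ^ b2) g) : ℂ) = 0)

private lemma defect_star (T1 T2 : H →L[ℂ] H) (hcomm : T1 * T2 = T2 * T1)
    (hdef : (1 : H →L[ℂ] H) - adjoint T1 * T1 - adjoint T2 * T2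
      + adjoint T1 * (adjoint T2 * (T1 * T2)) = 0) :
    star (T1 * T2) * (T1 * T2) = star T1 * T1 + star T2 * T2 - 1 := by
  have h1 : star T1 * star T2 = star T2 * star T1 := by
    rw [← star_mul, ← star_mul, hcomm]
  have hdef' : adjoint T1 * (adjoint T2 * (T1 * T2))
      = adjoint T1 * T1 + adjoint T2 * T2 - 1 := by
    have := hdef
    linear_combination (norm := noncomm_ring) hdef
  calc star (T1 * T2) * (T1 * T2) = star T1 * (star T2 * (T1 * T2)) := by
        rw [star_mul, ← h1]; noncomm_ring
    _ = star T1 * T1 + star T2 * T2 - 1 := by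
        simpa only [star_eq_adjoint] using hdef'

private lemma key1 (T1 T2 : H →L[ℂ] H) (hcomm : T1 * T2 = T2 * T1)
    (hdef : (1 : H →L[ℂ] H) - adjoint T1 * T1 - adjoint T2 * T2
      + adjoint T1 * (adjoint T2 * (T1 * T2)) = 0) (k : ℕ) :
    star (T1 ^ k * T2) * (T1 ^ k * T2)
      = star (T1 ^ k) * T1 ^ k + star T2 * T2 - 1 := by
  induction k with
  | zero => simp
  | succ k ih =>
    have hc : Commute T1 T2 := hcomm
    have hcom : T1 ^ (k + 1) * T2 = (T1 * T2) * T1 ^ k := by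
      have := (hc.pow_left k).eq  -- T1^k * T2 = T2 * T1^k
      calc T1 ^ (k + 1) * T2 = T1 * (T1 ^ k * T2) := by rw [pow_succ']; noncomm_ring
        _ = T1 * (T2 * T1 ^ k) := by rw [this]
        _ = (T1 * T2) * T1 ^ k := by noncomm_ring
    have hmid : star (T1 ^ k) * (star T2 * T2) * T1 ^ k
        = star (T1 ^ k) * T1 ^ k + star T2 * T2 - 1 := by
      have h2 : T2 * T1 ^ k = T1 ^ k * T2 := ((hc.pow_left k).eq).symm
      calc star (T1 ^ k) * (star T2 * T2) * T1 ^ k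
          = star (T2 * T1 ^ k) * (T2 * T1 ^ k) := by rw [star_mul]; noncomm_ring
        _ = star (T1 ^ k * T2) * (T1 ^ k * T2) := by rw [h2]
        _ = star (T1 ^ k) * T1 ^ k + star T2 * T2 - 1 := ih
    calc star (T1 ^ (k + 1) * T2) * (T1 ^ (k + 1) * T2)
        = star (T1 ^ k) * (star (T1 * T2) * (T1 * T2)) * T1 ^ k := by
          rw [hcom, star_mul]; noncomm_ring
      _ = star (T1 ^ k) * (star T1 * T1 + star T2 * T2 - 1) * T1 ^ k := by
          rw [defect_star T1 T2 hcomm hdef]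
      _ = star (T1 ^ k) * (star T1 * T1) * T1 ^ k
            + star (T1 ^ k) * (star T2 * T2) * T1 ^ k
            - star (T1 ^ k) * T1 ^ k := by noncomm_ring
      _ = star (T1 ^ (k + 1)) * T1 ^ (k + 1)
            + (star (T1 ^ k) * T1 ^ k + star T2 * T2 - 1)
            - star (T1 ^ k) * T1 ^ k := by
          have hfirst : star (T1 ^ k) * (star T1 * T1) * T1 ^ k
              = star (T1 ^ (k + 1)) * T1 ^ (k + 1) := by
            rw [pow_succ', star_mul]; noncomm_ring
          rw [hmid, hfirst]
      _ = star (T1 ^ (k + 1)) * T1 ^ (k + 1) + star T2 * T2 - 1 := by noncomm_ring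

private lemma key (T1 T2 : H →L[ℂ] H) (hcomm : T1 * T2 = T2 * T1)
    (hdef : (1 : H →L[ℂ] H) - adjoint T1 * T1 - adjoint T2 * T2
      + adjoint T1 * (adjoint T2 * (T1 * T2)) = 0) (k l : ℕ) :
    star (T1 ^ k * T2 ^ l) * (T1 ^ k * T2 ^ l)
      = star (T1 ^ k) * T1 ^ k + star (T2 ^ l) * T2 ^ l - 1 := by
  induction l with
  | zero => simp
  | succ l ih =>
    calc star (T1 ^ k * T2 ^ (l + 1)) * (T1 ^ k * T2 ^ (l + 1))
        = star T2 * (star (T1 ^ k * T2 ^ l) * (T1 ^ k * T2 ^ l)) * T2 := by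
          rw [show T1 ^ k * T2 ^ (l + 1) = (T1 ^ k * T2 ^ l) * T2 by
            rw [pow_succ]; noncomm_ring, star_mul]
          noncomm_ring
      _ = star T2 * (star (T1 ^ k) * T1 ^ k + star (T2 ^ l) * T2 ^ l - 1) * T2 := by
          rw [ih]
      _ = star T2 * (star (T1 ^ k) * T1 ^ k) * T2
            + star T2 * (star (T2 ^ l) * T2 ^ l) * T2 - star T2 * T2 := by
          noncomm_ring
      _ = star (T1 ^ k * T2) * (T1 ^ k * T2)
            + star (T2 ^ (l + 1)) * T2 ^ (l + 1) - star T2 * T2 := by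
          rw [star_mul, pow_succ, star_mul]; noncomm_ring
      _ = star (T1 ^ k) * T1 ^ k + star (T2 ^ (l + 1)) * T2 ^ (l + 1) - 1 := by
          rw [key1 T1 T2 hcomm hdef]; noncomm_ring

private lemma stmt14_lt (T1 T2 : H →L[ℂ] H) (hcomm : T1 * T2 = T2 * T1)
    (W : Submodule ℂ H) (hW : IsWandering T1 T2 W) (f0 : H) (hf0 : f0 ∈ W)
    (hdef : (1 : H →L[ℂ] H) - adjoint T1 * T1 - adjoint T2 * T2
      + adjoint T1 * (adjoint T2 * (T1 * T2)) = 0)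
    (m n q : ℕ) (hnq : n < q) :
    (inner ℂ ((T1 ^ m) ((T2 ^ n) f0)) ((T1 ^ m) ((T2 ^ q) f0)) : ℂ)
      = (inner ℂ ((T2 ^ n) f0) ((T2 ^ q) f0) : ℂ) := by
  set d := q - n with hd
  have hdq : q = n + d := by omega
  have hdne : d ≠ 0 := by omega
  set S := T1 ^ m * T2 ^ n with hS
  have h1 : (T1 ^ m) ((T2 ^ n) f0) = S f0 := by simp [hS, mul_apply]
  have h2 : (T1 ^ m) ((T2 ^ q) f0) = S ((T2 ^ d) f0) := by
    simp only [hS, mul_apply, hdq, pow_add]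
    rfl
  rw [h1, h2]
  have hadj : (inner ℂ (S f0) (S ((T2 ^ d) f0)) : ℂ)
      = inner ℂ f0 ((adjoint S * S) ((T2 ^ d) f0)) :=
    (adjoint_inner_right S f0 (S ((T2 ^ d) f0))).symm
  rw [hadj, show adjoint S * S = star S * S from rfl, key T1 T2 hcomm hdef m n]
  simp only [sub_apply, add_apply, ContinuousLinearMap.one_apply, inner_sub_right, inner_add_right]
  have hterm1 : (inner ℂ f0 ((star (T1 ^ m) * T1 ^ m) ((T2 ^ d) f0)) : ℂ) = 0 := by
    simp only [star_eq_adjoint, ContinuousLinearMap.mul_apply]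
    rw [adjoint_inner_right]
    have h0 := (hW f0 hf0 f0 hf0 m m d).1 hdne
    simpa only [ContinuousLinearMap.mul_apply] using h0
  have hterm3 : (inner ℂ f0 ((T2 ^ d) f0) : ℂ) = 0 := by
    have := (hW f0 hf0 f0 hf0 0 0 d).1 hdne
    simpa using this
  have hterm2 : (inner ℂ f0 ((star (T2 ^ n) * T2 ^ n) ((T2 ^ d) f0)) : ℂ)
      = inner ℂ ((T2 ^ n) f0) ((T2 ^ q) f0) := by
    simp only [star_eq_adjoint, ContinuousLinearMap.mul_apply]
    rw [adjoint_inner_right]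
    congr 1
    rw [hdq, pow_add, ContinuousLinearMap.mul_apply]
  rw [hterm1, hterm2, hterm3]
  ring

theorem stmt14 (T1 T2 : H →L[ℂ] H) (hcomm : T1 * T2 = T2 * T1)
    (W : Submodule ℂ H) (hW : IsWandering T1 T2 W) (f0 : H) (hf0 : f0 ∈ W)
    (hdef : (1 : H →L[ℂ] H) - adjoint T1 * T1 - adjoint T2 * T2
      + adjoint T1 * (adjoint T2 * (T1 * T2)) = 0)
    (m n q : ℕ) (hnq : n ≠ q) :
    (inner ℂ ((T1 ^ m) ((T2 ^ n) f0)) ((T1 ^ m) ((T2 ^ q) f0)) : ℂ)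
      = (inner ℂ ((T2 ^ n) f0) ((T2 ^ q) f0) : ℂ) := by
  rcases lt_or_gt_of_ne hnq with h | h
  · exact stmt14_lt T1 T2 hcomm W hW f0 hf0 hdef m n q h
  · have := stmt14_lt T1 T2 hcomm W hW f0 hf0 hdef m q n h
    calc (inner ℂ ((T1 ^ m) ((T2 ^ n) f0)) ((T1 ^ m) ((T2 ^ q) f0)) : ℂ)
        = starRingEnd ℂ (inner ℂ ((T1 ^ m) ((T2 ^ q) f0)) ((T1 ^ m) ((T2 ^ n) f0))) := by
          rw [inner_conj_symm]
      _ = starRingEnd ℂ (inner ℂ ((T2 ^ q) f0) ((T2 ^ n) f0)) := by rw [this]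
      _ = inner ℂ ((T2 ^ n) f0) ((T2 ^ q) f0) := by rw [inner_conj_symm]
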